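/- Suppose ⟨·,·⟩ is naturally reductive (⟨[X,Y]_𝔪,Z⟩ + ⟨Y,[X,Z]_𝔪⟩ = 0 for all X,Y,Z ∈ 𝔪). Then for every t ∈ ℝ and every Z ∈ 𝔪, the spin lift of the connection map Λ^t(Z)Y = t[Z,Y]_𝔪, namely Λ̃^t(Z) := (t/4) Σ_{j,k} ⟨[Z,Z_j]_𝔪, Z_k⟩ Z_j·Z_k ∈ Cl(𝔪), satisfies Λ̃^t(Z) = −(t/6)(H·Z + Z·H); equivalently, the covariant derivative of a constant spinor in direction Z is Clifford multiplication by (t/3)(Z ⌟ H). -/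

import Mathlib

open scoped BigOperators

/-- The quadratic form `v ↦ −⟨v,v⟩` on the subspace `𝔪`, built from a bilinear form `B`
on the ambient space; the associated Clifford algebra satisfies
`v·w + w·v = −2⟨v,w⟩·1` for `v,w ∈ 𝔪`. -/
noncomputable def mQF {𝔤 : Type*} [AddCommGroup 𝔤] [Module ℝ 𝔤]
    (𝔪 : Submodule ℝ 𝔤) (B : LinearMap.BilinForm ℝ 𝔤) : QuadraticForm ℝ ↥𝔪 :=
  LinearMap.BilinMap.toQuadraticMap ((-B).compl₁₂ 𝔪.subtype 𝔪.subtype)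

/-- The cubic element `H = (1/4) Σ_{i,j,k} ⟨[Z_i,Z_j]_𝔪, Z_k⟩ Z_i·Z_j·Z_k ∈ Cl(𝔪)`. -/
noncomputable def cubicH {𝔤 : Type*} [LieRing 𝔤] [LieAlgebra ℝ 𝔤]
    (𝔪 : Submodule ℝ 𝔤) (p𝔪 : 𝔤 →ₗ[ℝ] 𝔤) (B : LinearMap.BilinForm ℝ 𝔤)
    {n : ℕ} (Z : Fin n → 𝔤) (hZ𝔪 : ∀ i, Z i ∈ 𝔪) : CliffordAlgebra (mQF 𝔪 B) :=
  (1 / 4 : ℝ) • ∑ i, ∑ j, ∑ k, B (p𝔪 ⁅Z i, Z j⁆) (Z k) •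
    (CliffordAlgebra.ι (mQF 𝔪 B) ⟨Z i, hZ𝔪 i⟩ *
      CliffordAlgebra.ι (mQF 𝔪 B) ⟨Z j, hZ𝔪 j⟩ *
      CliffordAlgebra.ι (mQF 𝔪 B) ⟨Z k, hZ𝔪 k⟩)

/-! The Clifford relations for an orthonormal basis give
`Z_l·(Z_i·Z_j·Z_k) + (Z_i·Z_j·Z_k)·Z_l = −2(δ_{li} Z_j·Z_k − δ_{lj} Z_i·Z_k + δ_{lk} Z_i·Z_j)`.
Natural reductivity makes the structure constants `⟨[Z_i,Z_j]_𝔪, Z_k⟩` totally antisymmetric, so the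
three contractions agree and `H·Z_l + Z_l·H = −(3/2) Σ_{j,k} ⟨[Z_l,Z_j]_𝔪, Z_k⟩ Z_j·Z_k`.
Both sides are linear in the direction, so the identity passes from the basis to all of `𝔪`. -/

section AnticommutingGenerators

variable {R A : Type*} [CommRing R] [Ring A] [Algebra R A]

theorem anticomm_mul_mul_mul (x y z w : A) (a b c : R)
    (hxy : x * y + y * x = a • 1) (hxz : x * z + z * x = b • 1) (hxw : x * w + w * x = c • 1) :
    x * (y * z * w) + y * z * w * x = a • (z * w) - b • (y * w) + c • (y * z) := by
  calc x * (y * z * w) + y * z * w * x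
      = (x * y + y * x) * (z * w) - y * (x * z + z * x) * w
          + y * z * (x * w + w * x) := by noncomm_ring
    _ = a • (z * w) - b • (y * w) + c • (y * z) := by
        rw [hxy, hxz, hxw]
        simp only [smul_mul_assoc, mul_smul_comm, one_mul, mul_one]

theorem anticomm_sum_smul_mul_mul_mul {ι : Type*} [Fintype ι] [DecidableEq ι] (e : ι → A)
    (c : ι → ι → ι → R)
    (he : ∀ a b, e a * e b + e b * e a = (if a = b then (-2 : R) else 0) • 1)
    (hc₁₂ : ∀ i j k, c j i k = -c i j k) (hc₂₃ : ∀ i j k, c i k j = -c i j k) (l : ι) :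
    (∑ i, ∑ j, ∑ k, c i j k • (e i * e j * e k)) * e l
      + e l * ∑ i, ∑ j, ∑ k, c i j k • (e i * e j * e k)
      = (-6 : R) • ∑ j, ∑ k, c l j k • (e j * e k) := by
  have term : ∀ i j k, c i j k • (e i * e j * e k) * e l + e l * (c i j k • (e i * e j * e k))
      = (-2 : R) • ((if l = i then c i j k • (e j * e k) else 0)
          - (if l = j then c i j k • (e i * e k) else 0)
          + (if l = k then c i j k • (e i * e j) else 0)) := by
    intro i j k
    rw [smul_mul_assoc, mul_smul_comm, add_comm, ← smul_add,
      anticomm_mul_mul_mul _ _ _ _ _ _ _ (he l i) (he l j) (he l k)]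
    split_ifs <;> module
  calc (∑ i, ∑ j, ∑ k, c i j k • (e i * e j * e k)) * e l
        + e l * ∑ i, ∑ j, ∑ k, c i j k • (e i * e j * e k)
      = ∑ i, ∑ j, ∑ k, (c i j k • (e i * e j * e k) * e l + e l * (c i j k • (e i * e j * e k))) := by
        simp only [Finset.sum_mul, Finset.mul_sum, ← Finset.sum_add_distrib]
    _ = (-2 : R) • (∑ j, ∑ k, c l j k • (e j * e k) - ∑ i, ∑ k, c i l k • (e i * e k)
          + ∑ i, ∑ j, c i j l • (e i * e j)) := by
        simp only [term, ← Finset.smul_sum, Finset.sum_add_distrib, Finset.sum_sub_distrib,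
          Finset.sum_ite_irrel, Finset.sum_const_zero, Finset.sum_ite_eq, Finset.mem_univ, if_true]
    _ = (-6 : R) • ∑ j, ∑ k, c l j k • (e j * e k) := by
        simp only [hc₂₃ _ l, hc₁₂ l, neg_neg, neg_smul, Finset.sum_neg_distrib]
        module

end AnticommutingGenerators

theorem ι_mul_ι_add_swap_mQF {𝔤 : Type*} [AddCommGroup 𝔤] [Module ℝ 𝔤]
    (𝔪 : Submodule ℝ 𝔤) (B : LinearMap.BilinForm ℝ 𝔤) (v w : 𝔪) :
    CliffordAlgebra.ι (mQF 𝔪 B) v * CliffordAlgebra.ι (mQF 𝔪 B) w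
      + CliffordAlgebra.ι (mQF 𝔪 B) w * CliffordAlgebra.ι (mQF 𝔪 B) v
      = (-(B v w + B w v)) • 1 := by
  rw [CliffordAlgebra.ι_mul_ι_add_swap, mQF, LinearMap.BilinMap.polar_toQuadraticMap,
    Algebra.algebraMap_eq_smul_one]
  congr 1
  simp only [LinearMap.compl₁₂_apply, Submodule.subtype_apply, LinearMap.neg_apply]
  ring

theorem bilin_proj_lie_swap_left {𝔤 : Type*} [LieRing 𝔤] [LieAlgebra ℝ 𝔤]
    (B : LinearMap.BilinForm ℝ 𝔤) (p : 𝔤 →ₗ[ℝ] 𝔤) (x y z : 𝔤) :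
    B (p ⁅y, x⁆) z = -B (p ⁅x, y⁆) z := by
  rw [← lie_skew, map_neg, map_neg, LinearMap.neg_apply]

theorem bilin_proj_lie_swap_right {𝔤 : Type*} [LieRing 𝔤] [LieAlgebra ℝ 𝔤]
    {𝔪 : Submodule ℝ 𝔤} {p : 𝔤 →ₗ[ℝ] 𝔤} {B : LinearMap.BilinForm ℝ 𝔤}
    (hp : ∀ x, p x ∈ 𝔪) (hBsymm : ∀ x ∈ 𝔪, ∀ y ∈ 𝔪, B x y = B y x)
    (hnat : ∀ x ∈ 𝔪, ∀ y ∈ 𝔪, ∀ z ∈ 𝔪, B (p ⁅x, y⁆) z + B y (p ⁅x, z⁆) = 0)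
    {x y z : 𝔤} (hx : x ∈ 𝔪) (hy : y ∈ 𝔪) (hz : z ∈ 𝔪) :
    B (p ⁅x, z⁆) y = -B (p ⁅x, y⁆) z := by
  rw [hBsymm _ (hp _) _ hy]
  linarith [hnat _ hx _ hy _ hz]

section NaturallyReductive

variable {𝔤 : Type*} [LieRing 𝔤] [LieAlgebra ℝ 𝔤] {𝔪 : Submodule ℝ 𝔤} {p𝔪 : 𝔤 →ₗ[ℝ] 𝔤}
  {B : LinearMap.BilinForm ℝ 𝔤} {n : ℕ} {Z : Fin n → 𝔤}

theorem ι_mul_ι_add_swap_of_orthonormal (hZ𝔪 : ∀ i, Z i ∈ 𝔪)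
    (hZon : ∀ i j, B (Z i) (Z j) = if i = j then 1 else 0) (a b : Fin n) :
    CliffordAlgebra.ι (mQF 𝔪 B) ⟨Z a, hZ𝔪 a⟩ * CliffordAlgebra.ι (mQF 𝔪 B) ⟨Z b, hZ𝔪 b⟩
      + CliffordAlgebra.ι (mQF 𝔪 B) ⟨Z b, hZ𝔪 b⟩ * CliffordAlgebra.ι (mQF 𝔪 B) ⟨Z a, hZ𝔪 a⟩
      = (if a = b then (-2 : ℝ) else 0) • 1 := by
  rw [ι_mul_ι_add_swap_mQF]
  simp only [hZon, eq_comm (a := b)]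
  split_ifs <;> norm_num

-- `4 Λ̃¹(v)`: the spin lift of `Y ↦ [v, Y]_𝔪`, without the factor `t/4`.
variable (𝔪 p𝔪 B Z) in
noncomputable def adBivector (hZ𝔪 : ∀ i, Z i ∈ 𝔪) : 𝔪 →ₗ[ℝ] CliffordAlgebra (mQF 𝔪 B) where
  toFun v := ∑ j, ∑ k, B (p𝔪 ⁅(v : 𝔤), Z j⁆) (Z k) •
    (CliffordAlgebra.ι (mQF 𝔪 B) ⟨Z j, hZ𝔪 j⟩ * CliffordAlgebra.ι (mQF 𝔪 B) ⟨Z k, hZ𝔪 k⟩)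
  map_add' v w := by
    simp only [Submodule.coe_add, add_lie, map_add, LinearMap.add_apply, add_smul,
      Finset.sum_add_distrib]
  map_smul' a v := by
    simp only [Submodule.coe_smul, smul_lie, map_smul, LinearMap.smul_apply, smul_eq_mul,
      mul_smul, Finset.smul_sum, RingHom.id_apply]

theorem adBivector_eq_smul_anticomm_cubicH (hmem𝔪 : ∀ x, p𝔪 x ∈ 𝔪)
    (hBsymm : ∀ x ∈ 𝔪, ∀ y ∈ 𝔪, B x y = B y x)
    (hnat : ∀ x ∈ 𝔪, ∀ y ∈ 𝔪, ∀ z ∈ 𝔪, B (p𝔪 ⁅x, y⁆) z + B y (p𝔪 ⁅x, z⁆) = 0)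
    (hZ𝔪 : ∀ i, Z i ∈ 𝔪) (hZon : ∀ i j, B (Z i) (Z j) = if i = j then 1 else 0)
    (hZspan : Submodule.span ℝ (Set.range Z) = 𝔪) (v : 𝔪) :
    adBivector 𝔪 p𝔪 B Z hZ𝔪 v = (-(2 / 3) : ℝ) •
      (cubicH 𝔪 p𝔪 B Z hZ𝔪 * CliffordAlgebra.ι (mQF 𝔪 B) v
        + CliffordAlgebra.ι (mQF 𝔪 B) v * cubicH 𝔪 p𝔪 B Z hZ𝔪) := by
  let H := cubicH 𝔪 p𝔪 B Z hZ𝔪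
  suffices adBivector 𝔪 p𝔪 B Z hZ𝔪 = (-(2 / 3) : ℝ) •
      (LinearMap.mulLeft ℝ H + LinearMap.mulRight ℝ H) ∘ₗ CliffordAlgebra.ι (mQF 𝔪 B) from
    LinearMap.congr_fun this v
  refine LinearMap.ext_on_range ((Submodule.span_range_subtype_eq_top_iff 𝔪 hZ𝔪).2 hZspan)
    fun l => ?_
  have key := anticomm_sum_smul_mul_mul_mul _ _ (ι_mul_ι_add_swap_of_orthonormal hZ𝔪 hZon)
    (fun i j k => bilin_proj_lie_swap_left B p𝔪 (Z i) (Z j) (Z k))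
    (fun i j k => bilin_proj_lie_swap_right hmem𝔪 hBsymm hnat (hZ𝔪 i) (hZ𝔪 j) (hZ𝔪 k)) l
  simp only [LinearMap.smul_apply, LinearMap.comp_apply, LinearMap.add_apply,
    LinearMap.mulLeft_apply, LinearMap.mulRight_apply, H]
  rw [cubicH, smul_mul_assoc, mul_smul_comm, ← smul_add, key, smul_smul, smul_smul,
    show (-(2 / 3) * (1 / 4) * -6 : ℝ) = 1 by norm_num, one_smul]
  rfl

end NaturallyReductive

theorem stmt19_general
    {𝔤 : Type*} [LieRing 𝔤] [LieAlgebra ℝ 𝔤]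
    (𝔪 : Submodule ℝ 𝔤)
    (p𝔪 : 𝔤 →ₗ[ℝ] 𝔤)
    (hmem𝔪 : ∀ x, p𝔪 x ∈ 𝔪)
    (B : LinearMap.BilinForm ℝ 𝔤)
    (hBsymm : ∀ x ∈ 𝔪, ∀ y ∈ 𝔪, B x y = B y x)
    (hnat : ∀ x ∈ 𝔪, ∀ y ∈ 𝔪, ∀ z ∈ 𝔪, B (p𝔪 ⁅x, y⁆) z + B y (p𝔪 ⁅x, z⁆) = 0)
    {n : ℕ} (Z : Fin n → 𝔤) (hZ𝔪 : ∀ i, Z i ∈ 𝔪)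
    (hZon : ∀ i j, B (Z i) (Z j) = if i = j then 1 else 0)
    (hZspan : Submodule.span ℝ (Set.range Z) = 𝔪) :
    ∀ t : ℝ, ∀ w : 𝔤, ∀ hw : w ∈ 𝔪,
      (t / 4) • ∑ j, ∑ k, B (p𝔪 ⁅w, Z j⁆) (Z k) •
          (CliffordAlgebra.ι (mQF 𝔪 B) ⟨Z j, hZ𝔪 j⟩ *
            CliffordAlgebra.ι (mQF 𝔪 B) ⟨Z k, hZ𝔪 k⟩) =
        (-(t / 6)) • (cubicH 𝔪 p𝔪 B Z hZ𝔪 * CliffordAlgebra.ι (mQF 𝔪 B) ⟨w, hw⟩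
          + CliffordAlgebra.ι (mQF 𝔪 B) ⟨w, hw⟩ * cubicH 𝔪 p𝔪 B Z hZ𝔪) := by
  intro t w hw
  change (t / 4) • adBivector 𝔪 p𝔪 B Z hZ𝔪 ⟨w, hw⟩ = _
  rw [adBivector_eq_smul_anticomm_cubicH hmem𝔪 hBsymm hnat hZ𝔪 hZon hZspan, smul_smul]
  congr 1
  ring

/-- On a naturally reductive space, the spin lift
`Λ̃^t(Z) = (t/4) Σ_{j,k} ⟨[Z,Z_j]_𝔪, Z_k⟩ Z_j·Z_k` of the connection map
`Λ^t(Z)Y = t[Z,Y]_𝔪` satisfies `Λ̃^t(Z) = −(t/6)(H·Z + Z·H)`; i.e. the covariant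
derivative of a constant spinor in direction `Z` is Clifford multiplication by
`(t/3)(Z ⌟ H)`. -/
theorem stmt19
    {𝔤 : Type*} [LieRing 𝔤] [LieAlgebra ℝ 𝔤] [FiniteDimensional ℝ 𝔤]
    (𝔥 𝔪 : Submodule ℝ 𝔤)
    (p𝔥 p𝔪 : 𝔤 →ₗ[ℝ] 𝔤)
    (hsum : ∀ x, p𝔥 x + p𝔪 x = x)
    (hmem𝔥 : ∀ x, p𝔥 x ∈ 𝔥) (hmem𝔪 : ∀ x, p𝔪 x ∈ 𝔪)
    (hid𝔥 : ∀ x ∈ 𝔥, p𝔥 x = x) (hid𝔪 : ∀ x ∈ 𝔪, p𝔪 x = x)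
    (hsub : ∀ x ∈ 𝔥, ∀ y ∈ 𝔥, ⁅x, y⁆ ∈ 𝔥)
    (hhm : ∀ x ∈ 𝔥, ∀ y ∈ 𝔪, ⁅x, y⁆ ∈ 𝔪)
    (B : LinearMap.BilinForm ℝ 𝔤)
    (hBsymm : ∀ x ∈ 𝔪, ∀ y ∈ 𝔪, B x y = B y x)
    (hBpos : ∀ x ∈ 𝔪, x ≠ 0 → 0 < B x x)
    (hnat : ∀ x ∈ 𝔪, ∀ y ∈ 𝔪, ∀ z ∈ 𝔪, B (p𝔪 ⁅x, y⁆) z + B y (p𝔪 ⁅x, z⁆) = 0)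
    {n : ℕ} (Z : Fin n → 𝔤) (hZ𝔪 : ∀ i, Z i ∈ 𝔪)
    (hZon : ∀ i j, B (Z i) (Z j) = if i = j then 1 else 0)
    (hZspan : Submodule.span ℝ (Set.range Z) = 𝔪) :
    ∀ t : ℝ, ∀ w : 𝔤, ∀ hw : w ∈ 𝔪,
      (t / 4) • ∑ j, ∑ k, B (p𝔪 ⁅w, Z j⁆) (Z k) •
          (CliffordAlgebra.ι (mQF 𝔪 B) ⟨Z j, hZ𝔪 j⟩ *
            CliffordAlgebra.ι (mQF 𝔪 B) ⟨Z k, hZ𝔪 k⟩) =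
        (-(t / 6)) • (cubicH 𝔪 p𝔪 B Z hZ𝔪 * CliffordAlgebra.ι (mQF 𝔪 B) ⟨w, hw⟩
          + CliffordAlgebra.ι (mQF 𝔪 B) ⟨w, hw⟩ * cubicH 𝔪 p𝔪 B Z hZ𝔪) :=
  stmt19_general 𝔪 p𝔪 hmem𝔪 B hBsymm hnat Z hZ𝔪 hZon hZspan
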